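/- Consider a Markov chain on a finite state space X with transition probabilities p_{x→y}, a target set A ⊆ X, and a distance function D: X → [0,∞) with D(x) = 0 iff x ∈ A. Suppose for every integer k ≥ 1 there is l_k > 0 such that every x ∉ A with ⌈D(x)⌉ ≥ k satisfies the drift condition D(x) - Σ_y p_{x→y} D(y) ≥ l_k. Then the expected hitting time of A starting from ξ₀ satisfies E(T | X₀ = ξ₀) ≤ Σ_{k=1}^{⌈D(ξ₀)⌉} 1/l_k. -/

import Mathlib

/-!
Compare `h` with a supersolution. Let `M i = max (l 1, …, l (i + 1))` and let `G` be
the concave piecewise-linear function with `G 0 = 0` and slope `1 / M i` on `[i, i + 1]`.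
At a state `x ∉ A` the slope of `G` at `D x` is `1 / M (⌈D x⌉ - 1)` and the drift is at
least `M (⌈D x⌉ - 1)`, so concavity gives `1 + ∑ y, p x y * G (D y) ≤ G (D x)`. Hence
`h - G ∘ D` is subharmonic off `A` and nonpositive on `A`; as the positive drift always
allows a step to a smaller `D`, the maximum principle gives
`h ≤ G ∘ D ≤ ∑_{k ≤ ⌈D⌉} 1 / l k`.
-/

open Finset

lemma div_le_div_of_nonpos_left {a b c : ℝ} (ha : a ≤ 0) (hc : 0 < c) (h : c ≤ b) :
    a / c ≤ a / b := by
  simpa only [div_eq_mul_inv] using mul_le_mul_of_nonpos_left (inv_anti₀ hc h) ha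

/-- For `s ≥ 0`, the length of `[0, s] ∩ [i, i + 1]`. -/
noncomputable def unitOverlap (s : ℝ) (i : ℕ) : ℝ := min s (i + 1) - min s i

lemma unitOverlap_nonneg (s : ℝ) (i : ℕ) : 0 ≤ unitOverlap s i := by
  simp only [unitOverlap, min_def]; split_ifs <;> linarith

lemma unitOverlap_le_one (s : ℝ) (i : ℕ) : unitOverlap s i ≤ 1 := by
  simp only [unitOverlap, min_def]; split_ifs <;> linarith

lemma unitOverlap_of_le {s : ℝ} {i : ℕ} (h : s ≤ i) : unitOverlap s i = 0 := by
  simp only [unitOverlap, min_def]; split_ifs <;> linarith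

lemma unitOverlap_of_ge {s : ℝ} {i : ℕ} (h : (i : ℝ) + 1 ≤ s) : unitOverlap s i = 1 := by
  simp only [unitOverlap, min_def]; split_ifs <;> linarith

lemma sum_range_unitOverlap {s : ℝ} {n : ℕ} (hs : 0 ≤ s) (hn : s ≤ n) :
    ∑ i ∈ range n, unitOverlap s i = s := by
  have := sum_range_sub (fun j : ℕ => min s (j : ℝ)) n
  push_cast at this
  simp only [unitOverlap, this, min_eq_left hn, min_eq_right hs, sub_zero]

/-- The piecewise-linear function vanishing at `0` with slope `1 / M i` on `[i, i + 1]`;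
it is concave when `M` is monotone. -/
noncomputable def potential (M : ℕ → ℝ) (s : ℝ) : ℝ :=
  ∑ i ∈ range ⌈s⌉₊, unitOverlap s i / M i

section potential

variable {M : ℕ → ℝ}

lemma potential_eq_sum_range {s : ℝ} {n : ℕ} (hn : ⌈s⌉₊ ≤ n) :
    potential M s = ∑ i ∈ range n, unitOverlap s i / M i :=
  sum_subset (range_subset_range.mpr hn) fun i _ hi => by
    rw [unitOverlap_of_le (Nat.ceil_le.mp (by simpa using hi)), zero_div]

variable (hM : ∀ i, 0 < M i)
include hM

lemma potential_nonneg (s : ℝ) : 0 ≤ potential M s :=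
  sum_nonneg fun i _ => div_nonneg (unitOverlap_nonneg s i) (hM i).le

lemma potential_le_sum_inv (s : ℝ) : potential M s ≤ ∑ i ∈ range ⌈s⌉₊, 1 / M i :=
  sum_le_sum fun i _ => div_le_div_of_nonneg_right (unitOverlap_le_one s i) (hM i).le

lemma potential_sub_le (hMm : Monotone M) {s t : ℝ} (hs : 0 < s) (ht : 0 ≤ t) :
    potential M t - potential M s ≤ (t - s) / M (⌈s⌉₊ - 1) := by
  set K := ⌈s⌉₊ - 1
  have hK : ⌈s⌉₊ = K + 1 := by have := Nat.ceil_pos.mpr hs; omega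
  have hKs : (K : ℝ) < s := Nat.lt_ceil.mp (by omega)
  have hsK : s ≤ (K : ℝ) + 1 := by exact_mod_cast hK ▸ Nat.le_ceil s
  obtain ⟨n, hsn, htn⟩ : ∃ n, ⌈s⌉₊ ≤ n ∧ ⌈t⌉₊ ≤ n :=
    ⟨_, le_max_left _ _, le_max_right _ _⟩
  have termwise : ∀ i, (unitOverlap t i - unitOverlap s i) / M i ≤
      (unitOverlap t i - unitOverlap s i) / M K := by
    intro i
    rcases lt_trichotomy i K with hi | rfl | hi
    · have hi' : (i : ℝ) + 1 ≤ K := by exact_mod_cast hi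
      rw [unitOverlap_of_ge (s := s) (by linarith)]
      exact div_le_div_of_nonpos_left (by linarith [unitOverlap_le_one t i]) (hM i) (hMm hi.le)
    · exact le_rfl
    · have hi' : (K : ℝ) + 1 ≤ i := by exact_mod_cast hi
      rw [unitOverlap_of_le (s := s) (by linarith), sub_zero]
      exact div_le_div_of_nonneg_left (unitOverlap_nonneg t i) (hM K) (hMm hi.le)
  calc potential M t - potential M s
      = ∑ i ∈ range n, (unitOverlap t i - unitOverlap s i) / M i := by
        rw [potential_eq_sum_range htn, potential_eq_sum_range hsn,
          ← sum_sub_distrib]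
        simp only [sub_div]
    _ ≤ ∑ i ∈ range n, (unitOverlap t i - unitOverlap s i) / M K :=
        sum_le_sum fun i _ => termwise i
    _ = (t - s) / M K := by
        rw [← sum_div, sum_sub_distrib, sum_range_unitOverlap ht, sum_range_unitOverlap hs.le]
        · exact (Nat.le_ceil s).trans (by exact_mod_cast hsn)
        · exact (Nat.le_ceil t).trans (by exact_mod_cast htn)

lemma one_add_sum_mul_potential_le (hMm : Monotone M) {ι : Type*} [Fintype ι] {w d : ι → ℝ}
    (hw0 : ∀ i, 0 ≤ w i) (hw1 : ∑ i, w i = 1) (hd : ∀ i, 0 ≤ d i) {s : ℝ} (hs : 0 < s)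
    (hdrift : M (⌈s⌉₊ - 1) ≤ s - ∑ i, w i * d i) :
    1 + ∑ i, w i * potential M (d i) ≤ potential M s := by
  set m := M (⌈s⌉₊ - 1)
  have hstep : (∑ i, w i * d i - s) / m ≤ -1 := by
    rw [div_le_iff₀ (hM _)]; linarith
  calc 1 + ∑ i, w i * potential M (d i)
      ≤ 1 + ∑ i, w i * (potential M s + (d i - s) / m) :=
        add_le_add le_rfl (sum_le_sum fun i _ => mul_le_mul_of_nonneg_left
          (by linarith [potential_sub_le hM hMm hs (hd i)]) (hw0 i))
    _ = 1 + potential M s + (∑ i, w i * d i - s) / m := by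
        simp only [mul_add, sum_add_distrib, ← sum_mul, hw1, mul_div_assoc', ← sum_div, mul_sub,
          sum_sub_distrib]
        ring
    _ ≤ potential M s := by linarith

end potential

section weights

variable {ι : Type*} [Fintype ι] {w : ι → ℝ}

lemma exists_pos_lt_of_sum_mul_lt (hw0 : ∀ i, 0 ≤ w i) (hw1 : ∑ i, w i = 1) {d : ι → ℝ}
    {c : ℝ} (h : ∑ i, w i * d i < c) : ∃ j, 0 < w j ∧ d j < c := by
  by_contra! H
  have : ∑ i, w i * c ≤ ∑ i, w i * d i := sum_le_sum fun i _ => by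
    rcases (hw0 i).eq_or_lt with hi | hi
    · simp [← hi]
    · exact mul_le_mul_of_nonneg_left (H i hi) hi.le
  rw [← sum_mul, hw1, one_mul] at this
  linarith

lemma eq_of_le_sum_mul (hw0 : ∀ i, 0 ≤ w i) (hw1 : ∑ i, w i = 1) {u : ι → ℝ} {c : ℝ}
    (hu : ∀ i, u i ≤ c) (hc : c ≤ ∑ i, w i * u i) {j : ι} (hj : 0 < w j) : u j = c := by
  refine (hu j).antisymm (not_lt.mp fun hlt => ?_)
  have := sum_lt_sum (fun i _ => mul_le_mul_of_nonneg_left (hu i) (hw0 i))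
    ⟨j, mem_univ j, mul_lt_mul_of_pos_left hlt hj⟩
  rw [← sum_mul, hw1, one_mul] at this
  linarith

end weights

/-- At a maximiser of `u` with smallest `D`, subharmonicity forces every successor to be a
maximiser too, and one of them has smaller `D`. -/
theorem nonpos_of_le_sum_mul {X : Type*} [Fintype X] {p : X → X → ℝ}
    (hp0 : ∀ x y, 0 ≤ p x y) (hp1 : ∀ x, ∑ y, p x y = 1) {A : Set X} {D : X → ℝ}
    (hdesc : ∀ x ∉ A, ∃ y, 0 < p x y ∧ D y < D x) {u : X → ℝ}
    (huA : ∀ x ∈ A, u x ≤ 0) (hu : ∀ x ∉ A, u x ≤ ∑ y, p x y * u y) (x : X) :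
    u x ≤ 0 := by
  classical
  by_contra! hx
  obtain ⟨z, -, hz⟩ := exists_max_image univ u ⟨x, mem_univ x⟩
  obtain ⟨x₀, hx₀, hmin⟩ := exists_min_image {y | u y = u z} D ⟨z, by simp⟩
  rw [mem_filter_univ] at hx₀
  have hx₀A : x₀ ∉ A := fun h => by linarith [huA x₀ h, hz x (mem_univ x)]
  obtain ⟨y, hpy, hDy⟩ := hdesc x₀ hx₀A
  have hy : u y = u z :=
    eq_of_le_sum_mul (hp0 x₀) (hp1 x₀) (fun y => hz y (mem_univ y)) (hx₀ ▸ hu x₀ hx₀A)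
      hpy
  exact absurd (hmin y ((mem_filter_univ y).mpr hy)) (not_le.mpr hDy)

lemma sum_range_one_div_partialSups_le {l : ℕ → ℝ} (hl : ∀ k, 1 ≤ k → 0 < l k)
    (n : ℕ) :
    ∑ i ∈ range n, 1 / partialSups (fun i => l (i + 1)) i ≤ ∑ k ∈ Icc 1 n, 1 / l k := by
  calc ∑ i ∈ range n, 1 / partialSups (fun i => l (i + 1)) i
      ≤ ∑ i ∈ range n, 1 / l (i + 1) := sum_le_sum fun i _ =>
        one_div_le_one_div_of_le (hl _ (by omega))
          (le_partialSups_of_le (fun i => l (i + 1)) le_rfl)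
    _ = ∑ k ∈ Icc 1 n, 1 / l k := by
        rw [range_eq_Ico, sum_Ico_add' (fun k => 1 / l k) 0 n 1, zero_add,
          Ico_add_one_right_eq_Icc]

theorem stmt8_general {X : Type*} [Fintype X] (p : X → X → ℝ)
    (hp0 : ∀ x y, 0 ≤ p x y) (hp1 : ∀ x, ∑ y, p x y = 1)
    (A : Set X) (D : X → ℝ)
    (hD0 : ∀ x, 0 ≤ D x) (hDA : ∀ x, D x = 0 ↔ x ∈ A)
    (l : ℕ → ℝ) (hl : ∀ k, 1 ≤ k → 0 < l k)
    (hdrift : ∀ x ∉ A, ∀ k : ℕ, 1 ≤ k → (k : ℤ) ≤ ⌈D x⌉ →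
      D x - ∑ y, p x y * D y ≥ l k)
    (h : X → ℝ)
    (hhA : ∀ x ∈ A, h x = 0)
    (hstep : ∀ x ∉ A, h x = 1 + ∑ y, p x y * h y)
    (ξ₀ : X) :
    h ξ₀ ≤ ∑ k ∈ Finset.Icc 1 (⌈D ξ₀⌉.toNat), 1 / l k := by
  set M : ℕ → ℝ := ⇑(partialSups fun i => l (i + 1))
  have hM : ∀ i, 0 < M i := fun i =>
    (hl 1 le_rfl).trans_le (le_partialSups_of_le (fun i => l (i + 1)) (Nat.zero_le i))
  have hDpos : ∀ x ∉ A, 0 < D x := fun x hx =>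
    (hD0 x).lt_of_ne fun e => hx ((hDA x).mp e.symm)
  have hMdrift : ∀ x ∉ A, M (⌈D x⌉₊ - 1) ≤ D x - ∑ y, p x y * D y := fun x hx =>
    partialSups_le _ _ _ fun k hk => hdrift x hx (k + 1) (by omega) (by
      have := Nat.ceil_pos.mpr (hDpos x hx)
      rw [← Int.ceil_toNat] at this hk
      omega)
  set G : X → ℝ := fun x => potential M (D x)
  have hsuper : ∀ x ∉ A, 1 + ∑ y, p x y * G y ≤ G x := fun x hx =>
    one_add_sum_mul_potential_le hM (partialSups _).monotone (hp0 x) (hp1 x) hD0 (hDpos x hx)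
      (hMdrift x hx)
  have hdesc : ∀ x ∉ A, ∃ y, 0 < p x y ∧ D y < D x := fun x hx =>
    exists_pos_lt_of_sum_mul_lt (hp0 x) (hp1 x) (by linarith [hMdrift x hx, hM (⌈D x⌉₊ - 1)])
  have hhG : (h - G) ξ₀ ≤ 0 := by
    refine nonpos_of_le_sum_mul hp0 hp1 hdesc (fun x hx => ?_) (fun x hx => ?_) ξ₀
    · simp [hhA x hx, G, potential_nonneg hM]
    · simp only [Pi.sub_apply, mul_sub, sum_sub_distrib]
      linarith [hstep x hx, hsuper x hx]
  calc h ξ₀ ≤ G ξ₀ := by simpa [sub_nonpos] using hhG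
    _ ≤ ∑ i ∈ range ⌈D ξ₀⌉₊, 1 / M i := potential_le_sum_inv hM _
    _ ≤ _ := by rw [Int.ceil_toNat]; exact sum_range_one_div_partialSups_le hl _

/-- Variable drift theorem.  Given a Markov chain on a finite state space `X` with
transition probabilities `p`, a target set `A`, a distance function `D` vanishing
exactly on `A`, and drift constants `l k > 0` such that every `x ∉ A` with
`⌈D x⌉ ≥ k` satisfies `D x - ∑ y, p x y * D y ≥ l k`, the expected hitting time
function `h` of `A` (characterised by `h = 0` on `A` and the first-step equation
`h x = 1 + ∑ y, p x y * h y` off `A`) satisfies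
`h ξ₀ ≤ ∑_{k=1}^{⌈D ξ₀⌉} 1 / l k`. -/
theorem stmt8 {X : Type*} [Fintype X] (p : X → X → ℝ)
    (hp0 : ∀ x y, 0 ≤ p x y) (hp1 : ∀ x, ∑ y, p x y = 1)
    (A : Set X) (D : X → ℝ)
    (hD0 : ∀ x, 0 ≤ D x) (hDA : ∀ x, D x = 0 ↔ x ∈ A)
    (l : ℕ → ℝ) (hl : ∀ k, 1 ≤ k → 0 < l k)
    (hdrift : ∀ x ∉ A, ∀ k : ℕ, 1 ≤ k → (k : ℤ) ≤ ⌈D x⌉ →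
      D x - ∑ y, p x y * D y ≥ l k)
    (h : X → ℝ) (hh0 : ∀ x, 0 ≤ h x)
    (hhA : ∀ x ∈ A, h x = 0)
    (hstep : ∀ x ∉ A, h x = 1 + ∑ y, p x y * h y)
    (ξ₀ : X) :
    h ξ₀ ≤ ∑ k ∈ Finset.Icc 1 (⌈D ξ₀⌉.toNat), 1 / l k :=
  stmt8_general p hp0 hp1 A D hD0 hDA l hl hdrift h hhA hstep ξ₀
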